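/- (Theorem 1, Hamilton–Jacobi equation.) Let K > 0 and define w(t,S) := sup over x ∈ (-∞,0] of ( S x - (T-t) H(x) - x²/(4K) ) for t ≤ T and S ∈ ℝ. Then on the open set { (t,S) : t < T, S < λ m̄ (T-t) }, w is continuously differentiable, ∂_S w(t,S) equals the unique maximizer x*(t,S) < 0 of the supremum, and w satisfies -∂_t w(t,S) + H(∂_S w(t,S)) = 0. -/

import Mathlib

open MeasureTheory Filter Set Topology

/-!
Integrating by parts, `H x = λ F (-1/x) + λ x G (-1/x)` for `x < 0`, so `H' x = λ G (-1/x)` is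
continuous, nondecreasing and tends to `λ m̄` as `x → 0⁻`. Hence for `t < T` the derivative
`S - (T - t) H' x - x / (2K)` of the objective is strictly decreasing on `x < 0`, tends to `+∞` at
`-∞` and to `S - λ m̄ (T - t) < 0` at `0⁻`: it has a unique zero `x*(t, S) < 0`, the strict
maximiser, and strict monotonicity makes `x*` continuous in `(t, S)`. As a supremum of functions
affine in `(t, S)` attained at a continuous maximiser, `w` has gradient `(H x*, x*)` (envelope
theorem), which is continuous, and `-∂ₜw + H (∂_S w) = 0` is then immediate.
-/

theorem hasFDerivAt_of_isMaxOn_affine {E X : Type*} [NormedAddCommGroup E] [NormedSpace ℝ E]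
    {w : E → ℝ} {a : X → ℝ} {ℓ : X → E →L[ℝ] ℝ} {s : Set X} {xs : E → X} {q₀ : E}
    (hmax : ∀ᶠ q in 𝓝 q₀, xs q ∈ s ∧ IsMaxOn (fun y => a y + ℓ y q) s (xs q))
    (hw : ∀ᶠ q in 𝓝 q₀, w q = a (xs q) + ℓ (xs q) q)
    (hℓ : ContinuousAt (ℓ ∘ xs) q₀) : HasFDerivAt w (ℓ (xs q₀)) q₀ := by
  refine .of_isLittleO <| Asymptotics.isLittleO_iff.2 fun c hc => ?_
  have hclose : ∀ᶠ q in 𝓝 q₀, ‖ℓ (xs q) - ℓ (xs q₀)‖ < c := by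
    simpa [dist_eq_norm] using Metric.tendsto_nhds.1 hℓ c hc
  obtain ⟨⟨hs₀, hmax₀⟩, hw₀⟩ := (hmax.and hw).self_of_nhds
  filter_upwards [hmax, hw, hclose] with q ⟨hs, hmaxq⟩ hwq hq
  set L := ℓ (xs q) - ℓ (xs q₀)
  have hlower : 0 ≤ w q - w q₀ - ℓ (xs q₀) (q - q₀) := by
    have : a (xs q₀) + ℓ (xs q₀) q ≤ a (xs q) + ℓ (xs q) q := hmaxq hs₀
    rw [map_sub]
    linarith
  have hupper : w q - w q₀ - ℓ (xs q₀) (q - q₀) ≤ L (q - q₀) := by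
    have : a (xs q) + ℓ (xs q) q₀ ≤ a (xs q₀) + ℓ (xs q₀) q₀ := hmax₀ hs
    simp only [L, map_sub, sub_apply]
    linarith
  calc ‖w q - w q₀ - ℓ (xs q₀) (q - q₀)‖ ≤ ‖L (q - q₀)‖ := by
        rw [Real.norm_of_nonneg hlower]; exact hupper.trans (Real.le_norm_self _)
    _ ≤ ‖L‖ * ‖q - q₀‖ := L.le_opNorm _
    _ ≤ c * ‖q - q₀‖ := by gcongr

theorem continuousAt_of_strictAntiOn_of_apply_eq_zero {P : Type*} [TopologicalSpace P]
    {ψ : P → ℝ → ℝ} {xs : P → ℝ} {I : Set ℝ} {q₀ : P} (hI : I ∈ 𝓝 (xs q₀))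
    (hroot : ∀ᶠ q in 𝓝 q₀, xs q ∈ I ∧ ψ q (xs q) = 0 ∧ StrictAntiOn (ψ q) I)
    (hcont : ∀ x ∈ I, ContinuousAt (fun q => ψ q x) q₀) : ContinuousAt xs q₀ := by
  obtain ⟨hx₀, hψx₀, hanti₀⟩ := hroot.self_of_nhds
  refine tendsto_order.2 ⟨fun a ha => ?_, fun b hb => ?_⟩
  · obtain ⟨l, ⟨hal, hlx⟩, hsub⟩ := exists_Ioc_subset_of_mem_nhds' hI ha
    have ha' : (l + xs q₀) / 2 ∈ I := hsub ⟨by linarith, by linarith⟩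
    have hpos : 0 < ψ q₀ ((l + xs q₀) / 2) := hψx₀ ▸ hanti₀ ha' hx₀ (by linarith)
    filter_upwards [hroot, (hcont _ ha').eventually (lt_mem_nhds hpos)] with q ⟨hxq, hψq, hanti⟩ hq
    by_contra! hle
    linarith [hanti.antitoneOn hxq ha' (hle.trans (by linarith))]
  · obtain ⟨u, ⟨hxu, hub⟩, hsub⟩ := exists_Ico_subset_of_mem_nhds' hI hb
    have hb' : (xs q₀ + u) / 2 ∈ I := hsub ⟨by linarith, by linarith⟩
    have hneg : ψ q₀ ((xs q₀ + u) / 2) < 0 := hψx₀ ▸ hanti₀ hx₀ hb' (by linarith)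
    filter_upwards [hroot, (hcont _ hb').eventually (gt_mem_nhds hneg)] with q ⟨hxq, hψq, hanti⟩ hq
    by_contra! hle
    linarith [hanti.antitoneOn hb' hxq ((by linarith : (xs q₀ + u) / 2 ≤ b).trans hle)]

theorem apply_lt_of_hasDerivAt_of_strictAntiOn {φ φ' : ℝ → ℝ} {b x₀ y : ℝ} (hx₀ : x₀ < b)
    (hφ : ContinuousOn φ (Iic b)) (hderiv : ∀ x < b, HasDerivAt φ (φ' x) x)
    (hanti : StrictAntiOn φ' (Iio b)) (hroot : φ' x₀ = 0) (hy : y ≤ b) (hne : y ≠ x₀) :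
    φ y < φ x₀ := by
  rcases hne.lt_or_gt with hlt | hgt
  · have hmono : StrictMonoOn φ (Iic x₀) := by
      refine strictMonoOn_of_deriv_pos (convex_Iic x₀) (hφ.mono (Iic_subset_Iic.2 hx₀.le))
        fun x hx => ?_
      rw [interior_Iic] at hx
      rw [(hderiv x (hx.trans hx₀)).deriv, ← hroot]
      exact hanti (hx.trans hx₀) hx₀ hx
    exact hmono hlt.le self_mem_Iic hlt
  · have hanti' : StrictAntiOn φ (Icc x₀ b) := by
      refine strictAntiOn_of_deriv_neg (convex_Icc x₀ b) (hφ.mono Icc_subset_Iic_self)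
        fun x hx => ?_
      rw [interior_Icc] at hx
      rw [(hderiv x hx.2).deriv, ← hroot]
      exact hanti hx₀ hx.2 hx.1
    exact hanti' ⟨le_rfl, hx₀.le⟩ ⟨hgt.le, hy⟩ hgt

theorem MonotoneOn.le_of_tendsto_nhdsLT {g : ℝ → ℝ} {b c x : ℝ} (hg : MonotoneOn g (Iio b))
    (hlim : Tendsto g (𝓝[<] b) (𝓝 c)) (hx : x < b) : g x ≤ c :=
  ge_of_tendsto hlim <| by
    filter_upwards [Ioo_mem_nhdsLT hx] with y hy using hg hx hy.2 hy.1.le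

section HamiltonJacobi

variable {H H' : ℝ → ℝ} {c K τ S : ℝ}

theorem strictAntiOn_sub_mul_sub_div (hK : 0 < K) (hH'mono : MonotoneOn H' (Iio 0))
    (hτ : 0 ≤ τ) : StrictAntiOn (fun x => S - τ * H' x - x / (2 * K)) (Iio 0) := by
  intro x hx y hy hxy
  have : τ * H' x ≤ τ * H' y := mul_le_mul_of_nonneg_left (hH'mono hx hy hxy.le) hτ
  have : x / (2 * K) < y / (2 * K) := by gcongr
  dsimp only
  linarith

theorem exists_sub_mul_sub_div_eq_zero (hK : 0 < K) (hH'cont : ContinuousOn H' (Iio 0))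
    (hH'mono : MonotoneOn H' (Iio 0)) (hH'lim : Tendsto H' (𝓝[<] 0) (𝓝 c)) (hτ : 0 ≤ τ)
    (hS : S < c * τ) : ∃ x < 0, S - τ * H' x - x / (2 * K) = 0 := by
  have hnear : Tendsto (fun x => S - τ * H' x - x / (2 * K)) (𝓝[<] 0)
      (𝓝 (S - τ * c - 0 / (2 * K))) :=
    (tendsto_const_nhds.sub (hH'lim.const_mul τ)).sub
      ((tendsto_id.mono_left nhdsWithin_le_nhds).div_const _)
  -- `H' ≤ c` keeps the linear term `-x / (2K)` in control as `x → -∞`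
  have hfar : Tendsto (fun x => S - τ * H' x - x / (2 * K)) atBot atTop := by
    refine tendsto_atTop_mono' _ ?_ (tendsto_atTop_add_const_left _ (S - τ * c)
      (tendsto_neg_atBot_atTop.atTop_div_const (by positivity : 0 < 2 * K)))
    filter_upwards [Iio_mem_atBot 0] with x hx
    have := mul_le_mul_of_nonneg_left (hH'mono.le_of_tendsto_nhdsLT hH'lim hx) hτ
    rw [neg_div]
    linarith
  have hcont : ContinuousOn (fun x => S - τ * H' x - x / (2 * K)) (Iio 0) := by fun_prop
  obtain ⟨x, hx, hroot⟩ := isPreconnected_Iio.intermediate_value_Ioi (l₁ := 𝓝[<] 0) inf_le_right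
    (le_principal_iff.2 (Iio_mem_atBot 0)) hcont hnear hfar
    (show (0 : ℝ) ∈ Ioi (S - τ * c - 0 / (2 * K)) by rw [mem_Ioi, zero_div]; linarith)
  exact ⟨x, hx, hroot⟩

theorem sub_mul_sub_div_lt_of_deriv_eq_zero (hK : 0 < K) (hH : ContinuousOn H (Iic 0))
    (hH' : ∀ x < 0, HasDerivAt H (H' x) x) (hH'mono : MonotoneOn H' (Iio 0)) (hτ : 0 ≤ τ)
    {x y : ℝ} (hx : x < 0) (hroot : S - τ * H' x - x / (2 * K) = 0) (hy : y ≤ 0) (hne : y ≠ x) :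
    S * y - τ * H y - y ^ 2 / (4 * K) < S * x - τ * H x - x ^ 2 / (4 * K) := by
  refine apply_lt_of_hasDerivAt_of_strictAntiOn (φ := fun y => S * y - τ * H y - y ^ 2 / (4 * K))
    hx (by fun_prop) (fun z hz => ?_)
    (strictAntiOn_sub_mul_sub_div hK hH'mono hτ) hroot hy hne
  refine ((((hasDerivAt_id z).const_mul S).sub ((hH' z hz).const_mul τ)).sub
    ((hasDerivAt_pow 2 z).div_const (4 * K))).congr_deriv ?_
  field_simp
  ring

theorem isOpen_setOf_lt_and_lt_mul_sub (c T : ℝ) :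
    IsOpen {q : ℝ × ℝ | q.1 < T ∧ q.2 < c * (T - q.1)} :=
  (isOpen_lt continuous_fst continuous_const).inter (isOpen_lt continuous_snd (by fun_prop))

theorem exists_continuousAt_strict_maximizer (hK : 0 < K) (hH : ContinuousOn H (Iic 0))
    (hH' : ∀ x < 0, HasDerivAt H (H' x) x) (hH'cont : ContinuousOn H' (Iio 0))
    (hH'mono : MonotoneOn H' (Iio 0)) (hH'lim : Tendsto H' (𝓝[<] 0) (𝓝 c)) (T : ℝ) :
    ∃ xs : ℝ × ℝ → ℝ, ∀ q ∈ {q : ℝ × ℝ | q.1 < T ∧ q.2 < c * (T - q.1)},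
      xs q < 0 ∧ ContinuousAt xs q ∧ ∀ y ≤ 0, y ≠ xs q →
        q.2 * y - (T - q.1) * H y - y ^ 2 / (4 * K)
          < q.2 * xs q - (T - q.1) * H (xs q) - xs q ^ 2 / (4 * K) := by
  set U := {q : ℝ × ℝ | q.1 < T ∧ q.2 < c * (T - q.1)}
  have hU : IsOpen U := isOpen_setOf_lt_and_lt_mul_sub c T
  have hτ : ∀ q ∈ U, 0 ≤ T - q.1 := fun q hq => sub_nonneg.2 hq.1.le
  choose! xs hxs hroot using fun q (hq : q ∈ U) =>
    exists_sub_mul_sub_div_eq_zero hK hH'cont hH'mono hH'lim (hτ q hq) hq.2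
  refine ⟨xs, fun q hq => ⟨hxs q hq, ?_, fun y hy hne =>
    sub_mul_sub_div_lt_of_deriv_eq_zero hK hH hH' hH'mono (hτ q hq) (hxs q hq) (hroot q hq) hy hne⟩⟩
  refine continuousAt_of_strictAntiOn_of_apply_eq_zero
    (ψ := fun q x => q.2 - (T - q.1) * H' x - x / (2 * K)) (Iio_mem_nhds (hxs q hq)) ?_
    fun x _ => by fun_prop
  filter_upwards [hU.mem_nhds hq] with p hp
  exact ⟨hxs p hp, hroot p hp, strictAntiOn_sub_mul_sub_div hK hH'mono (hτ p hp)⟩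

theorem hasFDerivAt_of_continuousAt_maximizer {w : ℝ → ℝ → ℝ} {xs : ℝ × ℝ → ℝ} {T : ℝ}
    {q₀ : ℝ × ℝ} (hHc : ContinuousAt H (xs q₀)) (hxs : ContinuousAt xs q₀)
    (hmax : ∀ᶠ q in 𝓝 q₀, xs q ≤ 0 ∧ ∀ y ≤ 0, q.2 * y - (T - q.1) * H y - y ^ 2 / (4 * K)
      ≤ q.2 * xs q - (T - q.1) * H (xs q) - xs q ^ 2 / (4 * K))
    (hw : ∀ᶠ q in 𝓝 q₀, w q.1 q.2 = q.2 * xs q - (T - q.1) * H (xs q) - xs q ^ 2 / (4 * K)) :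
    HasFDerivAt (fun q : ℝ × ℝ => w q.1 q.2)
      (H (xs q₀) • ContinuousLinearMap.fst ℝ ℝ ℝ + xs q₀ • ContinuousLinearMap.snd ℝ ℝ ℝ) q₀ := by
  -- `(t, S) ↦ S x - (T - t) H x - x²/(4K)` is affine with linear part `H x • fst + x • snd`
  refine hasFDerivAt_of_isMaxOn_affine (a := fun x => -(T * H x) - x ^ 2 / (4 * K))
    (ℓ := fun x => H x • ContinuousLinearMap.fst ℝ ℝ ℝ + x • ContinuousLinearMap.snd ℝ ℝ ℝ)
    (s := Iic 0) ?_ ?_ (((hHc.comp hxs).smul continuousAt_const).add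
      (hxs.smul continuousAt_const))
  · filter_upwards [hmax] with q ⟨hq, hmaxq⟩
    refine ⟨hq, isMaxOn_iff.2 fun y hy => ?_⟩
    have := hmaxq y hy
    simp only [add_apply, smul_apply, ContinuousLinearMap.coe_fst', ContinuousLinearMap.coe_snd',
      smul_eq_mul]
    linarith
  · filter_upwards [hw] with q hq
    simp only [hq, add_apply, smul_apply, ContinuousLinearMap.coe_fst',
      ContinuousLinearMap.coe_snd', smul_eq_mul]
    ring

theorem hamiltonJacobi_of_hasDerivAt (hK : 0 < K) (hH : ContinuousOn H (Iic 0))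
    (hH' : ∀ x < 0, HasDerivAt H (H' x) x) (hH'cont : ContinuousOn H' (Iio 0))
    (hH'mono : MonotoneOn H' (Iio 0)) (hH'lim : Tendsto H' (𝓝[<] 0) (𝓝 c)) (T : ℝ)
    (w : ℝ → ℝ → ℝ)
    (hw : ∀ t S : ℝ, t ≤ T →
      w t S = sSup ((fun x : ℝ => S * x - (T - t) * H x - x ^ 2 / (4 * K)) '' Set.Iic 0)) :
    ContDiffOn ℝ 1 (fun q : ℝ × ℝ => w q.1 q.2) {q : ℝ × ℝ | q.1 < T ∧ q.2 < c * (T - q.1)} ∧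
      ∀ t S : ℝ, t < T → S < c * (T - t) →
        ∃ wt wS : ℝ,
          HasDerivAt (fun τ : ℝ => w τ S) wt t ∧
          HasDerivAt (fun σ : ℝ => w t σ) wS S ∧
          wS < 0 ∧
          (∀ y ∈ Set.Iic (0 : ℝ),
            S * y - (T - t) * H y - y ^ 2 / (4 * K)
              ≤ S * wS - (T - t) * H wS - wS ^ 2 / (4 * K)) ∧
          (∀ y ∈ Set.Iic (0 : ℝ),
            S * y - (T - t) * H y - y ^ 2 / (4 * K)
                = S * wS - (T - t) * H wS - wS ^ 2 / (4 * K) → y = wS) ∧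
          -wt + H wS = 0 := by
  set U := {q : ℝ × ℝ | q.1 < T ∧ q.2 < c * (T - q.1)}
  have hU : IsOpen U := isOpen_setOf_lt_and_lt_mul_sub c T
  obtain ⟨xs, hxs⟩ := exists_continuousAt_strict_maximizer hK hH hH' hH'cont hH'mono hH'lim T
  have hmax : ∀ q ∈ U, ∀ y ≤ 0, q.2 * y - (T - q.1) * H y - y ^ 2 / (4 * K)
      ≤ q.2 * xs q - (T - q.1) * H (xs q) - xs q ^ 2 / (4 * K) := fun q hq y hy =>
    (eq_or_ne y (xs q)).elim (fun h => h ▸ le_rfl) fun h => ((hxs q hq).2.2 y hy h).le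
  have hwU : ∀ q ∈ U, w q.1 q.2 = q.2 * xs q - (T - q.1) * H (xs q) - xs q ^ 2 / (4 * K) :=
    fun q hq => (hw q.1 q.2 hq.1.le).trans <| IsGreatest.csSup_eq
      ⟨⟨xs q, (hxs q hq).1.le, rfl⟩, by rintro _ ⟨y, hy, rfl⟩; exact hmax q hq y hy⟩
  set ℓ : ℝ → ℝ × ℝ →L[ℝ] ℝ :=
    fun x => H x • ContinuousLinearMap.fst ℝ ℝ ℝ + x • ContinuousLinearMap.snd ℝ ℝ ℝ
  have hHc : ∀ q ∈ U, ContinuousAt H (xs q) := fun q hq => (hH' _ (hxs q hq).1).continuousAt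
  have hℓ : ∀ q ∈ U, ContinuousAt (ℓ ∘ xs) q := fun q hq =>
    (((hHc q hq).comp (hxs q hq).2.1).smul continuousAt_const).add
      ((hxs q hq).2.1.smul continuousAt_const)
  have hderiv : ∀ q ∈ U, HasFDerivAt (fun q : ℝ × ℝ => w q.1 q.2) (ℓ (xs q)) q := fun q hq =>
    hasFDerivAt_of_continuousAt_maximizer (hHc q hq) (hxs q hq).2.1
      (by filter_upwards [hU.mem_nhds hq] with p hp using ⟨(hxs p hp).1.le, hmax p hp⟩)
      (by filter_upwards [hU.mem_nhds hq] with p hp using hwU p hp)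
  refine ⟨fun q hq => (contDiffAt_one_iff.2 ⟨ℓ ∘ xs, U, hU.mem_nhds hq,
    fun p hp => (hℓ p hp).continuousWithinAt, hderiv⟩).contDiffWithinAt, ?_⟩
  intro t S ht hS
  have hq : (t, S) ∈ U := ⟨ht, hS⟩
  refine ⟨H (xs (t, S)), xs (t, S), ?_, ?_, (hxs _ hq).1, hmax _ hq, fun y hy heq => ?_, by ring⟩
  · simpa [ℓ, Function.comp_def] using
      (hderiv _ hq).comp_hasDerivAt t ((hasDerivAt_id t).prodMk (hasDerivAt_const t S))
  · simpa [ℓ, Function.comp_def] using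
      (hderiv _ hq).comp_hasDerivAt S ((hasDerivAt_const S t).prodMk (hasDerivAt_id S))
  · by_contra hne
    exact ((hxs _ hq).2.2 y hy hne).ne heq

end HamiltonJacobi

theorem integral_integral_eq_mul_sub {f : ℝ → ℝ} (hf : Continuous f) (b : ℝ) :
    ∫ p in (0 : ℝ)..b, ∫ r in (0 : ℝ)..p, f r
      = b * (∫ r in (0 : ℝ)..b, f r) - ∫ p in (0 : ℝ)..b, p * f p := by
  have := intervalIntegral.integral_mul_deriv_eq_deriv_mul (a := 0) (b := b) (v := id)
    (v' := fun _ => 1) (fun p _ => (hf.integral_hasStrictDerivAt 0 p).hasDerivAt)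
    (fun p _ => hasDerivAt_id p) (hf.intervalIntegrable _ _) intervalIntegrable_const
  simp only [mul_one, id, intervalIntegral.integral_same, mul_zero, sub_zero] at this
  simp only [this, mul_comm _ b, mul_comm (f _)]

theorem tendsto_neg_one_div_nhdsLT_zero : Tendsto (fun x : ℝ => -1 / x) (𝓝[<] 0) atTop := by
  simpa [neg_div, one_div] using tendsto_inv_nhdsLT_zero

section CDF

variable {f F G : ℝ → ℝ}

-- the cancellation rests on `G' b = b * F' b`
theorem hasDerivAt_add_mul_comp_neg_one_div (hF : ∀ b, HasDerivAt F (f b) b)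
    (hG : ∀ b, HasDerivAt G (b * f b) b) (lam : ℝ) {x : ℝ} (hx : x ≠ 0) :
    HasDerivAt (fun y => lam * F (-1 / y) + lam * y * G (-1 / y)) (lam * G (-1 / x)) x := by
  have hinv : HasDerivAt (fun y : ℝ => -1 / y) (1 / x ^ 2) x := by
    simpa [neg_div, one_div] using (hasDerivAt_inv hx).fun_neg
  refine ((((hF _).comp x hinv).const_mul lam).add
    (((hasDerivAt_id x).const_mul lam).mul ((hG _).comp x hinv))).congr_deriv ?_
  simp only [Function.comp_apply, id]
  field_simp
  ring

theorem tendsto_add_mul_comp_neg_one_div {m : ℝ} (hF : Tendsto F atTop (𝓝 1))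
    (hG : Tendsto G atTop (𝓝 m)) (lam : ℝ) :
    Tendsto (fun y => lam * F (-1 / y) + lam * y * G (-1 / y)) (𝓝[<] 0) (𝓝 lam) := by
  have := ((hF.comp tendsto_neg_one_div_nhdsLT_zero).const_mul lam).add
    (((tendsto_id.mono_left nhdsWithin_le_nhds).const_mul lam).mul
      (hG.comp tendsto_neg_one_div_nhdsLT_zero))
  simpa using this

theorem continuousOn_Iic_of_eq_add_mul_comp_neg_one_div {H : ℝ → ℝ} {m lam : ℝ}
    (hF : ∀ b, HasDerivAt F (f b) b) (hG : ∀ b, HasDerivAt G (b * f b) b)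
    (hFlim : Tendsto F atTop (𝓝 1)) (hGlim : Tendsto G atTop (𝓝 m))
    (hH : ∀ x < 0, H x = lam * F (-1 / x) + lam * x * G (-1 / x)) (hH0 : H 0 = lam) :
    ContinuousOn H (Iic 0) := fun x hx => by
  rcases (mem_Iic.1 hx).lt_or_eq with hx | rfl
  · exact ((hasDerivAt_add_mul_comp_neg_one_div hF hG lam hx.ne).congr_of_eventuallyEq
      (eventually_of_mem (Iio_mem_nhds hx) hH)).continuousAt.continuousWithinAt
  · refine continuousWithinAt_Iio_iff_Iic.1 ?_
    rw [ContinuousWithinAt, hH0]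
    exact (tendsto_add_mul_comp_neg_one_div hFlim hGlim lam).congr'
      (eventually_of_mem self_mem_nhdsWithin fun x hx => (hH x hx).symm)

end CDF

theorem Monotone.monotoneOn_const_mul_comp_neg_one_div {G : ℝ → ℝ} (hG : Monotone G) {lam : ℝ}
    (hlam : 0 ≤ lam) : MonotoneOn (fun x => lam * G (-1 / x)) (Iio 0) := by
  intro x _ y hy hxy
  refine mul_le_mul_of_nonneg_left (hG ?_) hlam
  rw [neg_div, neg_div, neg_le_neg_iff]
  exact one_div_le_one_div_of_neg_of_le hy hxy

theorem stmt_14_general (f F G H : ℝ → ℝ) (mbar lam : ℝ)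
    (hf_cont : Continuous f)
    (hf_nonpos : ∀ p ≤ (0 : ℝ), f p = 0)
    (hf_pos : ∀ p : ℝ, 0 < p → 0 < f p)
    (hf_int : (∫ p in Set.Ioi (0 : ℝ), f p) = 1)
    (hmean_int : MeasureTheory.IntegrableOn (fun p : ℝ => p * f p) (Set.Ioi 0))
    (hmbar : mbar = ∫ p in Set.Ioi (0 : ℝ), p * f p)
    (hF : ∀ b : ℝ, F b = ∫ p in (0 : ℝ)..b, f p)
    (hG : ∀ b : ℝ, G b = ∫ p in (0 : ℝ)..b, p * f p)
    (hlam : 0 < lam)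
    (hHneg : ∀ x < (0 : ℝ), H x = -(lam * x) * ∫ p in (0 : ℝ)..(-1 / x), F p)
    (hHpos : ∀ x : ℝ, 0 ≤ x → H x = lam * (1 + x * mbar))
    (K T : ℝ) (hK : 0 < K)
    (w : ℝ → ℝ → ℝ)
    (hw : ∀ t S : ℝ, t ≤ T →
      w t S = sSup ((fun x : ℝ => S * x - (T - t) * H x - x ^ 2 / (4 * K)) '' Set.Iic 0)) :
    ContDiffOn ℝ 1 (fun q : ℝ × ℝ => w q.1 q.2)
        {q : ℝ × ℝ | q.1 < T ∧ q.2 < lam * mbar * (T - q.1)} ∧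
      ∀ t S : ℝ, t < T → S < lam * mbar * (T - t) →
        ∃ wt wS : ℝ,
          HasDerivAt (fun τ : ℝ => w τ S) wt t ∧
          HasDerivAt (fun σ : ℝ => w t σ) wS S ∧
          wS < 0 ∧
          (∀ y ∈ Set.Iic (0 : ℝ),
            S * y - (T - t) * H y - y ^ 2 / (4 * K)
              ≤ S * wS - (T - t) * H wS - wS ^ 2 / (4 * K)) ∧
          (∀ y ∈ Set.Iic (0 : ℝ),
            S * y - (T - t) * H y - y ^ 2 / (4 * K)
                = S * wS - (T - t) * H wS - wS ^ 2 / (4 * K) → y = wS) ∧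
          -wt + H wS = 0 := by
  have hFd : ∀ b, HasDerivAt F (f b) b := fun b =>
    (funext hF ▸ hf_cont.integral_hasStrictDerivAt 0 b).hasDerivAt
  have hGd : ∀ b, HasDerivAt G (b * f b) b := fun b =>
    (funext hG ▸ (continuous_id.mul hf_cont).integral_hasStrictDerivAt 0 b).hasDerivAt
  have hGmono : Monotone G := monotone_of_deriv_nonneg (fun b => (hGd b).differentiableAt)
    fun b => (hGd b).deriv ▸ (le_or_gt b 0).elim (fun h => by simp [hf_nonpos b h])
      fun h => mul_nonneg h.le (hf_pos b h).le
  have hFlim : Tendsto F atTop (𝓝 1) := hf_int ▸ (intervalIntegral_tendsto_integral_Ioi 0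
    (integrable_of_integral_eq_one hf_int) tendsto_id).congr fun b => (hF b).symm
  have hGlim : Tendsto G atTop (𝓝 mbar) := hmbar ▸ (intervalIntegral_tendsto_integral_Ioi 0
    hmean_int tendsto_id).congr fun b => (hG b).symm
  have hHrep : ∀ x < 0, H x = lam * F (-1 / x) + lam * x * G (-1 / x) := fun x hx => by
    simp only [hHneg x hx, hF, hG, integral_integral_eq_mul_sub hf_cont]
    field_simp [hx.ne]
    ring
  have hH0 : H 0 = lam := by simp [hHpos 0 le_rfl]
  have hGcont : Continuous G := continuous_iff_continuousAt.2 fun b => (hGd b).continuousAt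
  refine hamiltonJacobi_of_hasDerivAt hK
    (continuousOn_Iic_of_eq_add_mul_comp_neg_one_div hFd hGd hFlim hGlim hHrep hH0)
    (fun x hx => (hasDerivAt_add_mul_comp_neg_one_div hFd hGd lam hx.ne).congr_of_eventuallyEq
      (eventually_of_mem (Iio_mem_nhds hx) hHrep))
    (continuousOn_const.mul (hGcont.comp_continuousOn
      (continuousOn_const.div continuousOn_id fun x hx => (mem_Iio.1 hx).ne)))
    (hGmono.monotoneOn_const_mul_comp_neg_one_div hlam.le)
    ((hGlim.comp tendsto_neg_one_div_nhdsLT_zero).const_mul lam) T w hw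

/-- (Theorem 1, Hamilton–Jacobi equation.) Let `K > 0` and define
`w(t,S) := sup_{x ≤ 0} (S x - (T-t)H(x) - x²/(4K))`. On the open set
`{(t,S) : t < T, S < λ m̄ (T-t)}`, `w` is continuously differentiable,
`∂_S w(t,S)` is the unique maximizer `x*(t,S) < 0` of the supremum, and
`-∂_t w + H(∂_S w) = 0`. -/
theorem stmt_14 (f F G H : ℝ → ℝ) (mbar lam : ℝ)
    (hf_cont : Continuous f)
    (hf_nonpos : ∀ p ≤ (0 : ℝ), f p = 0)
    (hf_pos : ∀ p : ℝ, 0 < p → 0 < f p)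
    (hf_int : (∫ p in Set.Ioi (0 : ℝ), f p) = 1)
    (hf_tail : Filter.Tendsto (fun p : ℝ => p ^ 3 * f p) Filter.atTop (nhds 0))
    (hmean_int : MeasureTheory.IntegrableOn (fun p : ℝ => p * f p) (Set.Ioi 0))
    (hmbar : mbar = ∫ p in Set.Ioi (0 : ℝ), p * f p)
    (hF : ∀ b : ℝ, F b = ∫ p in (0 : ℝ)..b, f p)
    (hG : ∀ b : ℝ, G b = ∫ p in (0 : ℝ)..b, p * f p)
    (hlam : 0 < lam)
    (hHneg : ∀ x < (0 : ℝ), H x = -(lam * x) * ∫ p in (0 : ℝ)..(-1 / x), F p)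
    (hHpos : ∀ x : ℝ, 0 ≤ x → H x = lam * (1 + x * mbar))
    (K T : ℝ) (hK : 0 < K)
    (w : ℝ → ℝ → ℝ)
    (hw : ∀ t S : ℝ, t ≤ T →
      w t S = sSup ((fun x : ℝ => S * x - (T - t) * H x - x ^ 2 / (4 * K)) '' Set.Iic 0)) :
    ContDiffOn ℝ 1 (fun q : ℝ × ℝ => w q.1 q.2)
        {q : ℝ × ℝ | q.1 < T ∧ q.2 < lam * mbar * (T - q.1)} ∧
      ∀ t S : ℝ, t < T → S < lam * mbar * (T - t) →
        ∃ wt wS : ℝ,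
          HasDerivAt (fun τ : ℝ => w τ S) wt t ∧
          HasDerivAt (fun σ : ℝ => w t σ) wS S ∧
          wS < 0 ∧
          (∀ y ∈ Set.Iic (0 : ℝ),
            S * y - (T - t) * H y - y ^ 2 / (4 * K)
              ≤ S * wS - (T - t) * H wS - wS ^ 2 / (4 * K)) ∧
          (∀ y ∈ Set.Iic (0 : ℝ),
            S * y - (T - t) * H y - y ^ 2 / (4 * K)
                = S * wS - (T - t) * H wS - wS ^ 2 / (4 * K) → y = wS) ∧
          -wt + H wS = 0 :=
  stmt_14_general f F G H mbar lam hf_cont hf_nonpos hf_pos hf_int hmean_int hmbar hF hG hlam hHneg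
    hHpos K T hK w hw
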